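/- arXiv:1710.03528 — 3 statements merged into one kernel-verified Lean document; each statement's English description precedes it below -/
import Mathlib

section
/- For all integers p ≥ 0 and q ≥ 1, the improper integral ∫_0^∞ u^p (log(1+e^{-u}))^q du converges and equals p!·q!·(-1)^q·ζ(\overline{p+2},{1}_{q-1}), i.e. ∫_0^∞ u^p (log(1+e^{-u}))^q du = p!·q!·(-1)^q · Σ_{n_1 > n_2 > ⋯ > n_q ≥ 1} (-1)^{n_1} / (n_1^{p+2} · n_2 · n_3 ⋯ n_q). -/
open MeasureTheory Real Set Filter

/-- The alternating multiple zeta value `zeta(a-bar, {1}_r)`, i.e. the sum over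
strictly decreasing tuples `n_0 > n_1 > ... > n_r >= 1` of
`(-1)^(n_0) / (n_0^a * n_1 * ... * n_r)`. -/
noncomputable def altMZV (a r : ℕ) : ℝ :=
  ∑' f : {f : Fin (r + 1) → ℕ // (∀ i, 1 ≤ f i) ∧ StrictAnti f},
    (-1 : ℝ) ^ (f.1 0) / ((f.1 0 : ℝ) ^ a * ∏ i : Fin r, (f.1 i.succ : ℝ))

/-- The alternating zeta value `zeta(a-bar) = sum_{k>=1} (-1)^k / k^a`. -/
noncomputable def altZeta (a : ℕ) : ℝ := ∑' k : ℕ+, (-1 : ℝ) ^ (k : ℕ) / (k : ℝ) ^ a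

/-- The Riemann zeta value `zeta(m) = sum_{n>=1} 1 / n^m`. -/
noncomputable def zetaVal (m : ℕ) : ℝ := ∑' n : ℕ+, 1 / (n : ℝ) ^ m

/-!
Put `z = -e^{-u}`, so that `log (1 + e^{-u})^q = (-1)^q (-log (1 - z))^q`. The power series
`L = -log (1 - X) = ∑ Xⁿ/n` satisfies `X L' = X/(1 - X)`, so `N · [X^N] L^(k+1)` is `k + 1`
times the partial sum of the coefficients of `L^k`; by induction `[X^N] L^(k+1) = (k+1)! S_k(N)/N`
with `S_k(N) = ∑_{N > n₁ > ⋯ > n_k ≥ 1} 1/(n₁ ⋯ n_k)`. Splitting a decreasing tuple into its head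
and its tail then gives `(-log (1 - z))^(k+1)/(k+1)! = ∑_{n₀ > ⋯ > n_k ≥ 1} z^{n₀}/(n₀ n₁ ⋯ n_k)`.
Integrating termwise against `u^p`, with `∫₀^∞ u^p e^{-n u} du = p!/n^{p+1}`, gives the alternating
multiple zeta value. The interchange of sum and integral is justified by absolute convergence, which
follows from `S_k(N) ≤ (1 + log N)^k`.
-/

open Finset

theorem one_add_log_le_mul_rpow {x ε : ℝ} (hx : 1 ≤ x) (hε : 0 < ε) :
    1 + Real.log x ≤ (1 + ε⁻¹) * x ^ ε := by
  have h1 : 1 ≤ x ^ ε := Real.one_le_rpow hx hε.le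
  have h2 := Real.log_le_rpow_div (zero_le_one.trans hx) hε
  rw [div_eq_mul_inv] at h2
  nlinarith

theorem sum_range_inv_le_one_add_log (N : ℕ) : ∑ m ∈ range N, (m : ℝ)⁻¹ ≤ 1 + Real.log N := by
  rcases N with _ | n
  · simp
  have hharmonic : ∑ m ∈ range (n + 1), (m : ℝ)⁻¹ = harmonic n := by
    simp [harmonic, sum_range_succ']
  rw [hharmonic]
  refine (harmonic_le_one_add_log n).trans ?_
  rcases n.eq_zero_or_pos with rfl | hn
  · simp
  gcongr
  simp

theorem integrableOn_pow_mul_exp_neg_mul (p : ℕ) {b : ℝ} (hb : 0 < b) :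
    IntegrableOn (fun u : ℝ => u ^ p * exp (-(b * u))) (Ioi 0) := by
  refine (integrableOn_rpow_mul_exp_neg_mul_rpow (s := p) (by linarith [p.cast_nonneg (α := ℝ)])
    one_pos hb).congr_fun (fun u _ => ?_) measurableSet_Ioi
  simp [Real.rpow_natCast]

theorem integral_pow_mul_exp_neg_mul (p : ℕ) {b : ℝ} (hb : 0 < b) :
    ∫ u in Ioi (0 : ℝ), u ^ p * exp (-(b * u)) = p.factorial / b ^ (p + 1) := by
  have h := Real.integral_rpow_mul_exp_neg_mul_Ioi (a := p + 1) (by positivity) hb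
  rw [add_sub_cancel_right, Real.Gamma_nat_eq_factorial, ← Nat.cast_add_one,
    Real.rpow_natCast, div_pow, one_pow, one_div_mul_eq_div] at h
  rw [← h]
  refine setIntegral_congr_fun measurableSet_Ioi fun u _ => ?_
  simp [Real.rpow_natCast]

theorem integrableOn_pow_mul_log_one_add_exp_neg_pow (p : ℕ) {q : ℕ} (hq : q ≠ 0) :
    IntegrableOn (fun u : ℝ => u ^ p * log (1 + exp (-u)) ^ q) (Ioi 0) := by
  refine (integrableOn_pow_mul_exp_neg_mul p one_pos).mono' (by fun_prop) ?_
  filter_upwards [ae_restrict_mem measurableSet_Ioi] with u hu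
  have hexp : exp (-u) ≤ 1 := Real.exp_le_one_iff.2 (by linarith [mem_Ioi.1 hu])
  have hlog_nonneg : 0 ≤ log (1 + exp (-u)) := Real.log_nonneg (by linarith [exp_pos (-u)])
  have hlog_le : log (1 + exp (-u)) ≤ exp (-u) := by
    linarith [Real.log_le_sub_one_of_pos (by positivity : 0 < 1 + exp (-u))]
  rw [norm_mul, norm_pow, norm_pow, Real.norm_of_nonneg (mem_Ioi.1 hu).le,
    Real.norm_of_nonneg hlog_nonneg, one_mul]
  exact mul_le_mul_of_nonneg_left
    ((pow_le_of_le_one hlog_nonneg (hlog_le.trans hexp) hq).trans hlog_le)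
    (pow_nonneg (mem_Ioi.1 hu).le p)

namespace PowerSeries

theorem coeff_mul_mk_one {R : Type*} [Semiring R] (φ : R⟦X⟧) (n : ℕ) :
    coeff n (φ * mk 1) = ∑ m ∈ Finset.range (n + 1), coeff m φ := by
  simp [coeff_mul, Finset.Nat.sum_antidiagonal_eq_sum_range_succ_mk]

theorem hasSum_coeff_mul_mul_pow {R : Type*} [NormedCommRing R] [CompleteSpace R] {φ ψ : R⟦X⟧}
    {z a b : R} (hφ : HasSum (fun n => coeff n φ * z ^ n) a)
    (hψ : HasSum (fun n => coeff n ψ * z ^ n) b)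
    (hφ' : Summable fun n => ‖coeff n φ * z ^ n‖) (hψ' : Summable fun n => ‖coeff n ψ * z ^ n‖) :
    HasSum (fun n => coeff n (φ * ψ) * z ^ n) (a * b) := by
  have hcauchy (n : ℕ) : coeff n (φ * ψ) * z ^ n =
      ∑ kl ∈ antidiagonal n, coeff kl.1 φ * z ^ kl.1 * (coeff kl.2 ψ * z ^ kl.2) := by
    rw [coeff_mul, Finset.sum_mul]
    refine Finset.sum_congr rfl fun kl hkl => ?_
    rw [← mem_antidiagonal.1 hkl, pow_add]
    ring
  simp only [hcauchy]
  rw [← hφ.tsum_eq, ← hψ.tsum_eq, tsum_mul_tsum_eq_tsum_sum_antidiagonal_of_summable_norm hφ' hψ']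
  exact (summable_norm_sum_mul_antidiagonal_of_summable_norm hφ' hψ').of_norm.hasSum

/-- `∑ Xⁿ / n = -log (1 - X)`; the constant coefficient is `(0 : ℝ)⁻¹ = 0`. -/
noncomputable def negLogOneSub : ℝ⟦X⟧ := mk fun n => (n : ℝ)⁻¹

theorem derivative_negLogOneSub : d⁄dX ℝ negLogOneSub = mk 1 := by
  ext n
  simp [negLogOneSub, coeff_derivative, inv_mul_cancel₀ (n.cast_add_one_ne_zero (R := ℝ))]

theorem natCast_mul_coeff_negLogOneSub_pow_succ (q N : ℕ) :
    N * coeff N (negLogOneSub ^ (q + 1)) =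
      (q + 1) * ∑ m ∈ Finset.range N, coeff m (negLogOneSub ^ q) := by
  rcases N with _ | n
  · simp
  have := congrArg (coeff n) (derivative_pow negLogOneSub (q + 1))
  rw [coeff_derivative, derivative_negLogOneSub, mul_assoc, ← map_natCast (C (R := ℝ)),
    coeff_C_mul, Nat.add_sub_cancel, coeff_mul_mk_one] at this
  push_cast at this ⊢
  linear_combination this

theorem coeff_negLogOneSub_pow_nonneg (q n : ℕ) : 0 ≤ coeff n (negLogOneSub ^ q) := by
  induction q generalizing n with
  | zero => rw [pow_zero, coeff_one]; split_ifs <;> norm_num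
  | succ q ih =>
    rw [pow_succ, coeff_mul]
    exact Finset.sum_nonneg fun kl _ => mul_nonneg (ih _) (by simp [negLogOneSub])

theorem hasSum_coeff_negLogOneSub_mul_pow {z : ℝ} (hz : |z| < 1) :
    HasSum (fun n => coeff n negLogOneSub * z ^ n) (-Real.log (1 - z)) := by
  rw [← hasSum_nat_add_iff' 1]
  simpa [negLogOneSub, div_eq_inv_mul] using Real.hasSum_pow_div_log_of_abs_lt_one hz

theorem hasSum_coeff_negLogOneSub_pow_mul_pow (q : ℕ) {z : ℝ} (hz : |z| < 1) :
    HasSum (fun n => coeff n (negLogOneSub ^ q) * z ^ n) ((-Real.log (1 - z)) ^ q) := by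
  induction q generalizing z with
  | zero =>
    simp only [pow_zero, coeff_one, ite_mul, one_mul, zero_mul]
    convert hasSum_ite_eq 0 (1 : ℝ) using 2 with n
    split_ifs with h <;> simp [h]
  | succ q ih =>
    have habs : |(|z|)| < 1 := by rwa [abs_abs]
    have hnorm {φ : ℝ⟦X⟧} (hφ : ∀ n, 0 ≤ coeff n φ)
        (h : Summable fun n => coeff n φ * |z| ^ n) : Summable fun n => ‖coeff n φ * z ^ n‖ :=
      h.congr fun n => by
        rw [norm_mul, norm_pow, Real.norm_eq_abs, Real.norm_eq_abs, abs_of_nonneg (hφ n)]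
    rw [pow_succ, pow_succ]
    exact hasSum_coeff_mul_mul_pow (ih hz) (hasSum_coeff_negLogOneSub_mul_pow hz)
      (hnorm (coeff_negLogOneSub_pow_nonneg q) (ih habs).summable)
      (hnorm (fun n => by simp [negLogOneSub]) (hasSum_coeff_negLogOneSub_mul_pow habs).summable)

end PowerSeries

abbrev PosStrictAnti (k : ℕ) := {f : Fin k → ℕ // (∀ i, 1 ≤ f i) ∧ StrictAnti f}

/-- The tails of the tuples in `PosStrictAnti (k + 1)` with head `N`. -/
abbrev PosStrictAntiBelow (k N : ℕ) := {g : PosStrictAnti k // 1 ≤ N ∧ ∀ i, g.1 i < N}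

namespace PosStrictAnti

def headTailEquiv (k : ℕ) : PosStrictAnti (k + 1) ≃ Σ N, PosStrictAntiBelow k N where
  toFun f := ⟨f.1 0, ⟨Fin.tail f.1, fun _ => f.2.1 _, f.2.2.comp_strictMono Fin.strictMono_succ⟩,
    f.2.1 0, fun i => f.2.2 i.succ_pos⟩
  invFun x := ⟨Fin.cons x.1 x.2.1.1, Fin.cases x.2.2.1 x.2.1.2.1, by
    intro a b hab
    induction b using Fin.cases with
    | zero => exact absurd hab (Fin.not_lt_zero a)
    | succ j =>
      induction a using Fin.cases with
      | zero => simpa using x.2.2.2 j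
      | succ i => simpa using x.2.1.2.2 (Fin.succ_lt_succ_iff.mp hab)⟩
  left_inv f := Subtype.ext (Fin.cons_self_tail f.1)
  right_inv _ := rfl

variable {k : ℕ}

theorem head_pos (f : PosStrictAnti (k + 1)) : (0 : ℝ) < f.1 0 := by
  exact_mod_cast f.2.1 0

theorem hasSum_head_mul_inv_prod_tail {F E : ℕ → ℝ}
    (hE : ∀ N, HasSum (fun g : PosStrictAntiBelow k N => (∏ i, (g.1.1 i : ℝ))⁻¹) (E N))
    (hFE : Summable fun N => |F N| * E N) :
    HasSum (fun f : PosStrictAnti (k + 1) => F (f.1 0) * (∏ i : Fin k, (f.1 i.succ : ℝ))⁻¹)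
      (∑' N, F N * E N) := by
  rw [← (headTailEquiv k).symm.hasSum_iff]
  change HasSum (fun x : Σ N, PosStrictAntiBelow k N => F x.1 * (∏ i, (x.2.1.1 i : ℝ))⁻¹) _
  have hfibre N := (hE N).mul_left (F N)
  have hfibre_abs N : HasSum (fun g : PosStrictAntiBelow k N => |F N * (∏ i, (g.1.1 i : ℝ))⁻¹|)
      (|F N| * E N) := by
    refine ((hE N).mul_left |F N|).congr_fun fun g => ?_
    simp only [abs_mul, abs_inv, abs_prod, Nat.abs_cast]
  have habs : Summable fun x : Σ N, PosStrictAntiBelow k N => |F x.1 * (∏ i, (x.2.1.1 i : ℝ))⁻¹| :=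
    (summable_sigma_of_nonneg fun _ => abs_nonneg _).2
      ⟨fun N => (hfibre_abs N).summable, hFE.congr fun N => (hfibre_abs N).tsum_eq.symm⟩
  have hsum : Summable fun N => F N * E N :=
    habs.of_abs.sigma.congr fun N => (hfibre N).tsum_eq
  exact hsum.hasSum.sigma_of_hasSum hfibre habs.of_abs

end PosStrictAnti

/-- For `N ≥ 1`, `multipleHarmonicSum k N = ∑_{N > n₁ > ⋯ > n_k ≥ 1} 1 / (n₁ ⋯ n_k)`; the value
`0` at `N = 0` matches the empty type `PosStrictAntiBelow k 0`. -/
noncomputable def multipleHarmonicSum : ℕ → ℕ → ℝ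
  | 0, N => if N = 0 then 0 else 1
  | k + 1, N => ∑ m ∈ range N, multipleHarmonicSum k m / m

theorem hasSum_inv_prod_posStrictAntiBelow (k N : ℕ) :
    HasSum (fun g : PosStrictAntiBelow k N => (∏ i, (g.1.1 i : ℝ))⁻¹)
      (multipleHarmonicSum k N) := by
  induction k generalizing N with
  | zero =>
    rcases Nat.eq_zero_or_pos N with rfl | hN
    · have : IsEmpty (PosStrictAntiBelow 0 0) := ⟨fun g => by simpa using g.2.1⟩
      simp [multipleHarmonicSum]
    · let g₀ : PosStrictAntiBelow 0 N :=
        ⟨⟨Fin.elim0, fun i => i.elim0, fun a => a.elim0⟩, hN, fun i => i.elim0⟩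
      simpa [multipleHarmonicSum, hN.ne'] using
        hasSum_single g₀ fun g hg => (hg (Subsingleton.elim g g₀)).elim
  | succ k ih =>
    set F : ℕ → ℝ := fun m => if m < N then (m : ℝ)⁻¹ else 0
    have hF : ∀ m ∉ range N, F m = 0 := fun m hm => if_neg (mt Finset.mem_range.2 hm)
    have hFE : Summable fun m => |F m| * multipleHarmonicSum k m :=
      summable_of_ne_finset_zero (s := Finset.range N) fun m hm => by simp [hF m hm]
    have hbelow (f : PosStrictAnti (k + 1)) : (∀ i, f.1 i < N) ↔ f.1 0 < N :=
      ⟨fun h => h 0, fun h i => (f.2.2.antitone (Fin.zero_le i)).trans_lt h⟩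
    refine (hasSum_subtype_iff_indicator (s := {f | 1 ≤ N ∧ ∀ i, f.1 i < N})
      (f := fun f : PosStrictAnti (k + 1) => (∏ i, (f.1 i : ℝ))⁻¹)).2 ?_
    convert PosStrictAnti.hasSum_head_mul_inv_prod_tail (fun m => ih m) hFE using 1
    · funext f
      simp only [Set.indicator, Set.mem_ofPred_eq, hbelow, F, Fin.prod_univ_succ, mul_inv, ite_mul,
        zero_mul]
      congr 1
      exact propext ⟨fun h => h.2, fun h => ⟨(f.2.1 0).trans h.le, h⟩⟩
    · rw [tsum_eq_sum fun m hm => by simp [hF m hm], multipleHarmonicSum]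
      refine sum_congr rfl fun m hm => ?_
      simp [F, Finset.mem_range.1 hm, div_eq_inv_mul]

theorem multipleHarmonicSum_nonneg (k N : ℕ) : 0 ≤ multipleHarmonicSum k N :=
  (hasSum_inv_prod_posStrictAntiBelow k N).nonneg fun _ => by positivity

theorem multipleHarmonicSum_le (k N : ℕ) : multipleHarmonicSum k N ≤ (1 + Real.log N) ^ k := by
  have hlog (n : ℕ) : 0 ≤ 1 + Real.log n := by linarith [Real.log_natCast_nonneg n]
  induction k generalizing N with
  | zero => unfold multipleHarmonicSum; split_ifs <;> simp
  | succ k ih =>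
    have hmono {m : ℕ} (hm : m ∈ range N) : 1 + Real.log m ≤ 1 + Real.log N := by
      rcases m.eq_zero_or_pos with rfl | hm0
      · simp [Real.log_natCast_nonneg]
      gcongr
      exact (Finset.mem_range.1 hm).le
    calc multipleHarmonicSum (k + 1) N
        = ∑ m ∈ range N, multipleHarmonicSum k m * (m : ℝ)⁻¹ := by
          simp only [multipleHarmonicSum, div_eq_mul_inv]
      _ ≤ ∑ m ∈ range N, (1 + Real.log N) ^ k * (m : ℝ)⁻¹ := by
          gcongr with m hm
          exact (ih m).trans (pow_le_pow_left₀ (hlog m) (hmono hm) k)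
      _ ≤ (1 + Real.log N) ^ (k + 1) := by
          rw [← mul_sum, pow_succ]
          gcongr
          exact sum_range_inv_le_one_add_log N

theorem summable_multipleHarmonicSum_div_pow (k p : ℕ) :
    Summable fun N : ℕ => multipleHarmonicSum k N / (N : ℝ) ^ (p + 2) := by
  set ε : ℝ := (2 * (k + 1))⁻¹
  have hε : 0 < ε := by positivity
  have hexp : k * ε - 2 < -1 := by
    have : k * ε < 1 := by
      rw [← div_eq_mul_inv, div_lt_one (by positivity)]
      linarith
    linarith
  refine ((Real.summable_nat_rpow.2 hexp).mul_left ((1 + ε⁻¹) ^ k)).of_nonneg_of_le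
    (fun N => div_nonneg (multipleHarmonicSum_nonneg k N) (by positivity)) fun N => ?_
  rcases N.eq_zero_or_pos with rfl | hN
  · simp [Real.zero_rpow (by linarith : k * ε - 2 ≠ 0)]
  have hN1 : (1 : ℝ) ≤ N := by exact_mod_cast hN
  have hN0 : (0 : ℝ) < N := by linarith
  have hlog : 0 ≤ 1 + Real.log N := by linarith [Real.log_natCast_nonneg N]
  calc multipleHarmonicSum k N / (N : ℝ) ^ (p + 2)
      ≤ multipleHarmonicSum k N / (N : ℝ) ^ 2 := by
        gcongr
        exacts [multipleHarmonicSum_nonneg k N, by omega]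
    _ ≤ ((1 + ε⁻¹) * (N : ℝ) ^ ε) ^ k / (N : ℝ) ^ 2 := by
        gcongr
        exact (multipleHarmonicSum_le k N).trans
          (pow_le_pow_left₀ hlog (one_add_log_le_mul_rpow hN1 hε) k)
    _ = (1 + ε⁻¹) ^ k * (N : ℝ) ^ (k * ε - 2) := by
        rw [mul_pow, mul_div_assoc, Real.rpow_sub hN0, ← Real.rpow_natCast ((N : ℝ) ^ ε) k,
          ← Real.rpow_mul hN0.le, mul_comm ε, Real.rpow_two]

open PowerSeries in
theorem coeff_negLogOneSub_pow_succ (q N : ℕ) :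
    coeff N (negLogOneSub ^ (q + 1)) = ((q + 1).factorial : ℝ) * multipleHarmonicSum q N / N := by
  induction q generalizing N with
  | zero =>
    rcases eq_or_ne N 0 with rfl | hN <;> simp [negLogOneSub, multipleHarmonicSum, *]
  | succ q ih =>
    rcases eq_or_ne N 0 with rfl | hN
    · simp [coeff_zero_eq_constantCoeff, negLogOneSub]
    rw [eq_div_iff (Nat.cast_ne_zero.2 hN), mul_comm, natCast_mul_coeff_negLogOneSub_pow_succ,
      multipleHarmonicSum, mul_sum, mul_sum]
    simp only [ih, Nat.factorial_succ (q + 1)]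
    push_cast
    refine sum_congr rfl fun m _ => by ring

theorem hasSum_pow_head_div_mul_inv_prod_tail (r : ℕ) {z : ℝ} (hz : |z| < 1) :
    HasSum (fun f : PosStrictAnti (r + 1) => z ^ f.1 0 / f.1 0 * (∏ i : Fin r, (f.1 i.succ : ℝ))⁻¹)
      ((-Real.log (1 - z)) ^ (r + 1) / (r + 1).factorial) := by
  have hterm (w : ℝ) (N : ℕ) : w ^ N / N * multipleHarmonicSum r N =
      PowerSeries.coeff N (PowerSeries.negLogOneSub ^ (r + 1)) * w ^ N / (r + 1).factorial := by
    rw [coeff_negLogOneSub_pow_succ]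
    field_simp
  have habs : |(|z|)| < 1 := by rwa [abs_abs]
  have hFE : Summable fun N : ℕ => |z ^ N / N| * multipleHarmonicSum r N := by
    simpa only [abs_div, abs_pow, Nat.abs_cast, hterm] using
      ((PowerSeries.hasSum_coeff_negLogOneSub_pow_mul_pow (r + 1) habs).div_const _).summable
  convert PosStrictAnti.hasSum_head_mul_inv_prod_tail (hasSum_inv_prod_posStrictAntiBelow r) hFE
  simp only [hterm]
  exact ((PowerSeries.hasSum_coeff_negLogOneSub_pow_mul_pow (r + 1) hz).div_const _).tsum_eq.symm

/-- The `f`-th term of the expansion of `u ^ p * log (1 + e^{-u}) ^ (r + 1)`, divided by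
`(-1) ^ (r + 1) (r + 1)!`. -/
noncomputable def expansionTerm (p r : ℕ) (f : PosStrictAnti (r + 1)) (u : ℝ) : ℝ :=
  (-1) ^ f.1 0 / f.1 0 * (∏ i : Fin r, (f.1 i.succ : ℝ))⁻¹ * (u ^ p * exp (-(f.1 0 * u)))

section expansionTerm

variable (p : ℕ) {r : ℕ}

theorem hasSum_expansionTerm {u : ℝ} (hu : 0 < u) :
    HasSum (fun f => expansionTerm p r f u)
      (u ^ p * ((-1) ^ (r + 1) * log (1 + exp (-u)) ^ (r + 1) / (r + 1).factorial)) := by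
  have hz : |-exp (-u)| < 1 := by
    rw [abs_neg, abs_of_pos (exp_pos _), Real.exp_lt_one_iff]
    linarith
  have h := (hasSum_pow_head_div_mul_inv_prod_tail r hz).mul_left (u ^ p)
  rw [sub_neg_eq_add, neg_pow (log _)] at h
  refine h.congr_fun fun f => ?_
  rw [expansionTerm, neg_pow (exp (-u)), ← Real.exp_nat_mul, mul_neg]
  ring

theorem integrable_expansionTerm (f : PosStrictAnti (r + 1)) :
    Integrable (expansionTerm p r f) (volume.restrict (Ioi 0)) :=
  (integrableOn_pow_mul_exp_neg_mul p f.head_pos).const_mul _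

theorem integral_expansionTerm (f : PosStrictAnti (r + 1)) :
    ∫ u in Ioi (0 : ℝ), expansionTerm p r f u =
      p.factorial * ((-1) ^ f.1 0 / ((f.1 0 : ℝ) ^ (p + 2) * ∏ i : Fin r, (f.1 i.succ : ℝ))) := by
  simp only [expansionTerm, integral_const_mul, integral_pow_mul_exp_neg_mul p f.head_pos]
  field_simp
  ring

theorem integral_norm_expansionTerm (f : PosStrictAnti (r + 1)) :
    ∫ u in Ioi (0 : ℝ), ‖expansionTerm p r f u‖ =
      p.factorial / (f.1 0 : ℝ) ^ (p + 2) * (∏ i : Fin r, (f.1 i.succ : ℝ))⁻¹ := by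
  have hnorm : ∀ u ∈ Ioi (0 : ℝ), ‖expansionTerm p r f u‖ =
      (f.1 0 : ℝ)⁻¹ * (∏ i : Fin r, (f.1 i.succ : ℝ))⁻¹ * (u ^ p * exp (-(f.1 0 * u))) := by
    intro u hu
    have := mem_Ioi.1 hu
    rw [expansionTerm, norm_mul, Real.norm_of_nonneg (by positivity : 0 ≤ u ^ p * exp _)]
    simp
  rw [setIntegral_congr_fun measurableSet_Ioi hnorm, integral_const_mul,
    integral_pow_mul_exp_neg_mul p f.head_pos]
  field_simp
  ring

theorem summable_integral_norm_expansionTerm :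
    Summable fun f : PosStrictAnti (r + 1) => ∫ u in Ioi (0 : ℝ), ‖expansionTerm p r f u‖ := by
  refine (PosStrictAnti.hasSum_head_mul_inv_prod_tail
    (F := fun N : ℕ => (p.factorial : ℝ) / (N : ℝ) ^ (p + 2))
    (hasSum_inv_prod_posStrictAntiBelow r) ?_).summable.congr
    fun f => (integral_norm_expansionTerm p f).symm
  refine ((summable_multipleHarmonicSum_div_pow r p).mul_left (p.factorial : ℝ)).congr fun N => ?_
  rw [abs_of_nonneg (by positivity)]
  ring

end expansionTerm

theorem integral_pow_mul_log_one_add_exp_neg_pow (p r : ℕ) :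
    ∫ u in Ioi (0 : ℝ), u ^ p * log (1 + exp (-u)) ^ (r + 1) =
      (-1) ^ (r + 1) * (r + 1).factorial * p.factorial * altMZV (p + 2) r := by
  have hexpand : ∀ u ∈ Ioi (0 : ℝ), u ^ p * log (1 + exp (-u)) ^ (r + 1) =
      (-1) ^ (r + 1) * (r + 1).factorial * ∑' f, expansionTerm p r f u := by
    intro u hu
    rw [(hasSum_expansionTerm p hu).tsum_eq]
    field_simp
    rw [← pow_mul, mul_comm (r + 1) 2, pow_mul, neg_one_sq, one_pow, mul_one]
  rw [setIntegral_congr_fun measurableSet_Ioi hexpand, integral_const_mul,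
    ← integral_tsum_of_summable_integral_norm (integrable_expansionTerm p)
      (summable_integral_norm_expansionTerm p)]
  simp only [integral_expansionTerm, tsum_mul_left]
  rw [altMZV]
  ring

theorem louchard_lemma1_part1 (p q : ℕ) (hq : 1 ≤ q) :
    IntegrableOn (fun u : ℝ => u ^ p * Real.log (1 + Real.exp (-u)) ^ q) (Set.Ioi 0) ∧
    ∫ u in Set.Ioi (0:ℝ), u ^ p * Real.log (1 + Real.exp (-u)) ^ q
      = (Nat.factorial p : ℝ) * (Nat.factorial q) * (-1) ^ q * altMZV (p + 2) (q - 1) := by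
  obtain ⟨r, rfl⟩ : ∃ r, q = r + 1 := ⟨q - 1, by omega⟩
  refine ⟨integrableOn_pow_mul_log_one_add_exp_neg_pow p r.succ_ne_zero, ?_⟩
  rw [integral_pow_mul_log_one_add_exp_neg_pow, Nat.add_sub_cancel]
  ring
end

section
/- The improper integral ∫_0^∞ [u·log(1+e^{-u}) + (log(1+e^{-u}))²] du converges and equals ζ(3); consequently the coefficient I_3 = (1/8)∫_0^∞ [u·log(1+e^{-u}) + (log(1+e^{-u}))²] du in Louchard's asymptotic expansion equals ζ(3)/8. -/
open MeasureTheory Real Set Filter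

namespace L3

noncomputable def Hh (m : ℕ) : ℝ := ∑ i ∈ Finset.range m, 1/((i:ℝ)+1)

lemma Hh_nonneg (m : ℕ) : 0 ≤ Hh m :=
  Finset.sum_nonneg fun i _ => by positivity

lemma Hh_succ (m : ℕ) : Hh (m+1) = Hh m + 1/((m:ℝ)+1) := by
  simp [Hh, Finset.sum_range_succ]

lemma Hh_le (m : ℕ) : Hh m ≤ 2 * Real.sqrt m := by
  induction m with
  | zero => simp [Hh]
  | succ n ih =>
    rw [Hh_succ]
    have h1 : Real.sqrt n + Real.sqrt (n+1) ≤ 2 * ((n:ℝ)+1) := by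
      have a1 : Real.sqrt n ≤ (n:ℝ)+1 := by
        calc Real.sqrt n ≤ Real.sqrt ((n+1)^2) := by
              apply Real.sqrt_le_sqrt; nlinarith [Nat.cast_nonneg (α := ℝ) n]
          _ = (n:ℝ)+1 := by rw [Real.sqrt_sq (by positivity)]
      have a2 : Real.sqrt ((n:ℝ)+1) ≤ (n:ℝ)+1 := by
        calc Real.sqrt ((n:ℝ)+1) ≤ Real.sqrt (((n:ℝ)+1)^2) := by
              apply Real.sqrt_le_sqrt; nlinarith [Nat.cast_nonneg (α := ℝ) n]
          _ = (n:ℝ)+1 := by rw [Real.sqrt_sq (by positivity)]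
      linarith
    have h2 : 1/((n:ℝ)+1) ≤ 2 * (Real.sqrt (n+1) - Real.sqrt n) := by
      have hs : (Real.sqrt (n+1) - Real.sqrt n) * (Real.sqrt (n+1) + Real.sqrt n) = 1 := by
        have e1 : Real.sqrt ((n:ℝ)+1) ^ 2 = (n:ℝ)+1 := Real.sq_sqrt (by positivity)
        have e2 : Real.sqrt n ^ 2 = (n:ℝ) := Real.sq_sqrt (by positivity)
        nlinarith
      have hpos : 0 < Real.sqrt (n+1) + Real.sqrt n := by
        have : (0:ℝ) < Real.sqrt (n+1) := Real.sqrt_pos.2 (by positivity)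
        have := Real.sqrt_nonneg (n:ℝ)
        linarith
      rw [div_le_iff₀ (by positivity)]
      calc 1 = (Real.sqrt (n+1) - Real.sqrt n) * (Real.sqrt (n+1) + Real.sqrt n) := hs.symm
        _ ≤ (Real.sqrt (n+1) - Real.sqrt n) * (2 * ((n:ℝ)+1)) := by
            have hd : 0 ≤ Real.sqrt (n+1) - Real.sqrt n := by
              have := Real.sqrt_le_sqrt (show (n:ℝ) ≤ (n:ℝ)+1 by linarith)
              push_cast at this ⊢; linarith
            apply mul_le_mul_of_nonneg_left _ hd
            push_cast; linarith [h1]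
        _ = 2 * (Real.sqrt (n+1) - Real.sqrt n) * ((n:ℝ)+1) := by ring
    push_cast at *
    linarith [ih]

lemma summable_rpow32 : Summable (fun n : ℕ => Real.sqrt ((n:ℝ)+1) / ((n:ℝ)+1)^2) := by
  have key : Summable (fun n : ℕ => ((n:ℝ)+1) ^ (-(3/2) : ℝ)) := by
    have := Real.summable_one_div_nat_rpow (p := (3/2:ℝ)).2 (by norm_num)
    have h2 := (summable_nat_add_iff (f := fun n : ℕ => 1 / (n:ℝ) ^ ((3/2:ℝ))) 1).2 this
    apply h2.congr
    intro n
    rw [Real.rpow_neg (by positivity), one_div]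
    norm_num
  apply key.congr
  intro n
  have hb : (0:ℝ) < (n:ℝ)+1 := by positivity
  rw [Real.rpow_neg hb.le]
  have h3 : ((n:ℝ)+1) ^ ((3:ℝ)/2) = ((n:ℝ)+1)^2 / Real.sqrt ((n:ℝ)+1) := by
    rw [eq_div_iff (ne_of_gt (Real.sqrt_pos.2 hb)), Real.sqrt_eq_rpow,
      ← Real.rpow_natCast ((n:ℝ)+1) 2, ← Real.rpow_add hb]
    norm_num
  rw [h3, inv_div]

/-- telescoping sum -/
lemma hasSum_tele (j : ℕ) :
    HasSum (fun k : ℕ => 1/((k:ℝ)+1) - 1/((k:ℝ)+(j:ℝ)+2)) (Hh (j+1)) := by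
  have hnn : ∀ k : ℕ, 0 ≤ 1/((k:ℝ)+1) - 1/((k:ℝ)+(j:ℝ)+2) := by
    intro k
    have h1 : (0:ℝ) < (k:ℝ)+1 := by positivity
    have h2 : ((k:ℝ)+1) ≤ (k:ℝ)+(j:ℝ)+2 := by
      have := Nat.cast_nonneg (α := ℝ) j; linarith
    have := one_div_le_one_div_of_le h1 h2
    linarith
  rw [hasSum_iff_tendsto_nat_of_nonneg hnn]
  have key : ∀ K : ℕ, ∑ k ∈ Finset.range K, (1/((k:ℝ)+1) - 1/((k:ℝ)+(j:ℝ)+2))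
      = Hh (j+1) - (Hh (K+j+1) - Hh K) := by
    intro K
    rw [Finset.sum_sub_distrib]
    have e1 : ∑ k ∈ Finset.range K, 1/((k:ℝ)+(j:ℝ)+2) = Hh (K+j+1) - Hh (j+1) := by
      have : Hh (K+j+1) = Hh (j+1) + ∑ k ∈ Finset.range K, 1/((k:ℝ)+(j:ℝ)+2) := by
        have := Finset.sum_range_add (fun i => 1/((i:ℝ)+1)) (j+1) K
        rw [show K+j+1 = (j+1)+K by ring, Hh, this]
        congr 1
        apply Finset.sum_congr rfl
        intro k _
        push_cast; ring_nf
      linarith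
    rw [e1]
    have : ∑ k ∈ Finset.range K, 1/((k:ℝ)+1) = Hh K := rfl
    rw [this]; ring
  simp_rw [key]
  have hto : Tendsto (fun K : ℕ => Hh (K+j+1) - Hh K) atTop (nhds 0) := by
    have hb : ∀ K : ℕ, |Hh (K+j+1) - Hh K| ≤ ((j:ℝ)+1)/((K:ℝ)+1) := by
      intro K
      have e : Hh (K+j+1) - Hh K = ∑ i ∈ Finset.range (j+1), 1/(((K+i:ℕ):ℝ)+1) := by
        have := Finset.sum_range_add (fun i => 1/((i:ℝ)+1)) K (j+1)
        rw [show K+j+1 = K+(j+1) by ring, Hh, Hh, this]; ring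
      rw [e, abs_of_nonneg (Finset.sum_nonneg fun i _ => by positivity)]
      calc ∑ i ∈ Finset.range (j+1), 1/(((K+i:ℕ):ℝ)+1)
          ≤ ∑ _i ∈ Finset.range (j+1), 1/((K:ℝ)+1) := by
            apply Finset.sum_le_sum
            intro i _
            apply one_div_le_one_div_of_le (by positivity)
            push_cast
            linarith [Nat.cast_nonneg (α := ℝ) i]
        _ = ((j:ℝ)+1)/((K:ℝ)+1) := by
            rw [Finset.sum_const, Finset.card_range]
            push_cast; ring
    have hto2 : Tendsto (fun K : ℕ => ((j:ℝ)+1)/((K:ℝ)+1)) atTop (nhds 0) := by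
      apply Tendsto.div_atTop tendsto_const_nhds
      exact tendsto_atTop_add_const_right _ 1 tendsto_natCast_atTop_atTop
    have := squeeze_zero_norm (f := fun K : ℕ => Hh (K+j+1) - Hh K) (fun K => by simpa using hb K) hto2
    simpa using this
  have := tendsto_const_nhds (x := Hh (j+1)) (f := atTop (α := ℕ)) |>.sub hto
  simpa using this

noncomputable def aa : ℕ × ℕ → ℝ := fun p => 1/(((p.1:ℝ)+1)*((p.2:ℝ)+1)*((p.1:ℝ)+(p.2:ℝ)+2))

lemma aa_pos (p : ℕ × ℕ) : 0 < aa p := by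
  unfold aa; positivity

lemma hasSum_aa_row (j : ℕ) : HasSum (fun k => aa (j,k)) (Hh (j+1)/((j:ℝ)+1)^2) := by
  have h := (hasSum_tele j).mul_left (1/((j:ℝ)+1)^2)
  rw [show 1/((j:ℝ)+1)^2 * Hh (j+1) = Hh (j+1)/((j:ℝ)+1)^2 by ring] at h
  have he : (fun k : ℕ => aa (j,k))
      = fun k : ℕ => 1/((j:ℝ)+1)^2 * (1/((k:ℝ)+1) - 1/((k:ℝ)+(j:ℝ)+2)) := by
    funext k
    unfold aa
    have h1 : ((j:ℝ)+1) ≠ 0 := by positivity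
    have h2 : ((k:ℝ)+1) ≠ 0 := by positivity
    have h3 : ((j:ℝ)+(k:ℝ)+2) ≠ 0 := by positivity
    have h4 : ((k:ℝ)+(j:ℝ)+2) ≠ 0 := by positivity
    field_simp
    ring
  rw [he]
  exact h

lemma summable_rowSums : Summable (fun j : ℕ => Hh (j+1)/((j:ℝ)+1)^2) := by
  refine Summable.of_nonneg_of_le (fun j => div_nonneg (Hh_nonneg _) (by positivity)) (fun j => ?_)
    (summable_rpow32.mul_left 2)
  have hle := Hh_le (j+1)
  push_cast at hle
  have h2 : (0:ℝ) < ((j:ℝ)+1)^2 := by positivity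
  rw [div_le_iff₀ h2]
  calc Hh (j+1) ≤ 2 * Real.sqrt ((j:ℝ)+1) := hle
    _ = 2 * (Real.sqrt ((j:ℝ)+1) / ((j:ℝ)+1)^2) * ((j:ℝ)+1)^2 := by
        field_simp

lemma summable_aa : Summable aa := by
  apply (summable_prod_of_nonneg (fun p => (aa_pos p).le)).2
  constructor
  · intro j; exact (hasSum_aa_row j).summable
  · apply summable_rowSums.congr
    intro j
    exact (hasSum_aa_row j).tsum_eq.symm

lemma tsum_aa : ∑' p, aa p = ∑' j, Hh (j+1)/((j:ℝ)+1)^2 := by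
  rw [Summable.tsum_prod' summable_aa (fun j => (hasSum_aa_row j).summable)]
  congr 1
  funext j
  exact (hasSum_aa_row j).tsum_eq

lemma summable_of_le_aa {f : ℕ×ℕ → ℝ} (h : ∀ p, |f p| ≤ aa p) : Summable f :=
  Summable.of_abs (Summable.of_nonneg_of_le (fun p => abs_nonneg _) h summable_aa)

/-- diagonal regrouping -/
lemma diag (w : ℕ → ℝ)
    (hw : Summable (fun p : ℕ×ℕ => w (p.1+p.2+1) / ((p.1:ℝ)+1))) :
    ∑' p : ℕ×ℕ, w (p.1+p.2+1) / ((p.1:ℝ)+1) = ∑' n : ℕ, w n * Hh n := by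
  classical
  set G : ℕ×ℕ → ℝ := fun q => if q.2 < q.1 then w q.1 / ((q.2:ℝ)+1) else 0 with hG
  set φ : ℕ×ℕ → ℕ×ℕ := fun p => (p.1+p.2+1, p.1) with hφ
  have hinj : Function.Injective φ := by
    intro p q h
    simp only [hφ, Prod.mk.injEq] at h
    obtain ⟨h1, h2⟩ := h
    ext
    · exact h2
    · omega
  have hsupp : Function.support G ⊆ Set.range φ := by
    intro q hq
    obtain ⟨q1, q2⟩ := q
    simp only [Function.mem_support, hG] at hq
    by_cases hlt : q2 < q1
    · refine ⟨(q2, q1 - q2 - 1), ?_⟩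
      have : q2 + (q1 - q2 - 1) + 1 = q1 := by omega
      simp only [hφ, Prod.mk.injEq]
      exact ⟨this, trivial⟩
    · simp [hlt] at hq
  have hcomp : ∀ p : ℕ×ℕ, G (φ p) = w (p.1+p.2+1) / ((p.1:ℝ)+1) := by
    intro p
    simp only [hG, hφ]
    rw [if_pos (by omega)]
  have heq : ∑' p : ℕ×ℕ, w (p.1+p.2+1) / ((p.1:ℝ)+1) = ∑' q, G q := by
    rw [← hinj.tsum_eq hsupp]
    exact tsum_congr fun p => (hcomp p).symm
  rw [heq]
  have hGsum : Summable G := by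
    have : Summable (G ∘ φ) := by
      apply hw.congr
      intro p
      exact (hcomp p).symm
    exact (hinj.summable_iff (fun x hx => by
      by_contra h
      exact hx (hsupp (Function.mem_support.2 h)))).1 this
  rw [Summable.tsum_prod' hGsum (fun n => by
    apply summable_of_finite_support
    apply Set.Finite.subset (Set.finite_Iio n)
    intro k hk
    simp only [Function.mem_support, hG] at hk
    by_contra hks
    simp only [Set.mem_Iio, not_lt] at hks
    exact hk (by rw [if_neg (by omega)]))]
  congr 1
  funext n
  have : ∑' k : ℕ, G (n, k) = ∑ k ∈ Finset.range n, G (n, k) := by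
    apply tsum_eq_sum
    intro k hk
    simp only [Finset.mem_range, not_lt] at hk
    simp only [hG]
    rw [if_neg (by omega)]
  rw [this]
  have : ∑ k ∈ Finset.range n, G (n, k) = ∑ k ∈ Finset.range n, w n * (1/((k:ℝ)+1)) := by
    apply Finset.sum_congr rfl
    intro k hk
    simp only [Finset.mem_range] at hk
    simp only [hG]
    rw [if_pos (by omega)]
    ring
  rw [this, ← Finset.mul_sum]
  rfl

noncomputable def Z3 : ℝ := ∑' n : ℕ, 1/((n:ℝ)+1)^3
noncomputable def Eta : ℝ := ∑' n : ℕ, (-1:ℝ)^(n+1)/((n:ℝ)+1)^3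
noncomputable def VV : ℝ := ∑' p : ℕ×ℕ, aa p
noncomputable def SS : ℝ := ∑' p : ℕ×ℕ, (-1:ℝ)^(p.1+p.2) * aa p
noncomputable def MM : ℝ := ∑' p : ℕ×ℕ, (-1:ℝ)^(p.1+1) * aa p

lemma summable_cube : Summable (fun n : ℕ => 1/((n:ℝ)+1)^3) := by
  have h := (Real.summable_one_div_nat_pow (p := 3)).2 (by norm_num)
  have h2 := (summable_nat_add_iff (f := fun n : ℕ => 1 / (n:ℝ) ^ 3) 1).2 h
  apply h2.congr
  intro n
  push_cast
  ring

lemma summable_sgn_cube : Summable (fun n : ℕ => (-1:ℝ)^(n+1)/((n:ℝ)+1)^3) := by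
  apply Summable.of_abs
  apply summable_cube.congr
  intro n
  rw [abs_div, abs_pow, abs_neg, abs_one, one_pow, abs_of_pos (by positivity)]

lemma eta3 : Eta = -(3/4) * Z3 := by
  classical
  set T : ℕ → ℝ := fun n => (1 + (-1:ℝ)^(n+1)) /((n:ℝ)+1)^3 with hT
  have hTsum : Summable T := by
    apply Summable.of_abs
    apply Summable.of_nonneg_of_le (fun n => abs_nonneg _) _ (summable_cube.mul_left 2)
    intro n
    rw [hT]
    simp only
    rw [abs_div, abs_of_pos (show (0:ℝ) < ((n:ℝ)+1)^3 by positivity)]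
    have hnum : |1 + (-1:ℝ)^(n+1)| ≤ 2 := by
      rcases Nat.even_or_odd (n+1) with h | h
      · rw [h.neg_one_pow]; norm_num
      · rw [h.neg_one_pow]; norm_num
    calc |1 + (-1:ℝ)^(n+1)|/((n:ℝ)+1)^3 ≤ 2/((n:ℝ)+1)^3 := by gcongr
      _ = 2 * (1/((n:ℝ)+1)^3) := by ring
  have split : ∀ n : ℕ, T n = 1/((n:ℝ)+1)^3 + (-1:ℝ)^(n+1)/((n:ℝ)+1)^3 := by
    intro n; rw [hT]; ring
  have h1 : ∑' n, T n = Z3 + Eta := by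
    rw [tsum_congr split, Summable.tsum_add summable_cube summable_sgn_cube]; rfl
  set ψ : ℕ → ℕ := fun m => 2*m+1 with hψ
  have hinj : Function.Injective ψ := fun a b h => by simp [hψ] at h; omega
  have hsupp : ∀ n ∉ Set.range ψ, T n = 0 := by
    intro n hn
    have heven : Even n := by
      rcases Nat.even_or_odd n with h | h
      · exact h
      · obtain ⟨k, hk⟩ := h
        exact absurd ⟨k, by simp [hψ]; omega⟩ hn
    rw [hT]
    simp only
    rw [(heven.add_one).neg_one_pow]
    ring
  have h2 : ∑' n, T n = (1/4) * Z3 := by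
    rw [← hinj.tsum_eq (Function.support_subset_iff'.2 hsupp)]
    have he : ∀ m : ℕ, T (ψ m) = (1/4) * (1/((m:ℝ)+1)^3) := by
      intro m
      rw [hT, hψ]
      simp only
      have h4 : (-1:ℝ)^(2*m+1+1) = 1 := by
        rw [show 2*m+1+1 = 2*(m+1) by ring, pow_mul]
        norm_num
      rw [h4]
      push_cast
      have hm : ((m:ℝ)+1) ≠ 0 := by positivity
      field_simp
      ring
    rw [tsum_congr he, tsum_mul_left]
    rfl
  have h3 := h1.symm.trans h2
  linarith

lemma aa_swap (p : ℕ×ℕ) : aa (p.2, p.1) = aa p := by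
  unfold aa; simp only; ring_nf

lemma summable_sgn1_aa : Summable (fun p : ℕ×ℕ => (-1:ℝ)^(p.1+1) * aa p) := by
  apply summable_of_le_aa
  intro p
  rw [abs_mul, abs_pow, abs_neg, abs_one, one_pow, one_mul, abs_of_pos (aa_pos p)]

lemma summable_sgn2_aa : Summable (fun p : ℕ×ℕ => (-1:ℝ)^(p.2+1) * aa p) := by
  apply summable_of_le_aa
  intro p
  rw [abs_mul, abs_pow, abs_neg, abs_one, one_pow, one_mul, abs_of_pos (aa_pos p)]

lemma summable_sgn12_aa : Summable (fun p : ℕ×ℕ => (-1:ℝ)^(p.1+p.2) * aa p) := by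
  apply summable_of_le_aa
  intro p
  rw [abs_mul, abs_pow, abs_neg, abs_one, one_pow, one_mul, abs_of_pos (aa_pos p)]

lemma MM_eq_row : MM = ∑' j : ℕ, (-1:ℝ)^(j+1) * (Hh (j+1)/((j:ℝ)+1)^2) := by
  unfold MM
  have hrow : ∀ j : ℕ, HasSum (fun k => (-1:ℝ)^(j+1) * aa (j,k))
      ((-1:ℝ)^(j+1) * (Hh (j+1)/((j:ℝ)+1)^2)) := fun j => (hasSum_aa_row j).mul_left _
  rw [Summable.tsum_prod' summable_sgn1_aa (fun j => (hrow j).summable)]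
  exact tsum_congr fun j => (hrow j).tsum_eq

lemma MM2_eq : (∑' p : ℕ×ℕ, (-1:ℝ)^(p.2+1) * aa p) = MM := by
  unfold MM
  rw [← (Equiv.prodComm ℕ ℕ).tsum_eq (fun p : ℕ×ℕ => (-1:ℝ)^(p.1+1) * aa p)]
  apply tsum_congr
  intro p
  simp only [Equiv.prodComm_apply, Prod.swap]
  rw [aa_swap]

lemma parity_rel : VV + MM + MM + SS = (1/2) * VV := by
  classical
  set E : ℕ×ℕ → ℝ := fun p => (1+(-1:ℝ)^(p.1+1))*(1+(-1:ℝ)^(p.2+1)) * aa p with hE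
  have habs : ∀ n : ℕ, |1+(-1:ℝ)^(n+1)| ≤ 2 := by
    intro n
    rcases Nat.even_or_odd (n+1) with h | h
    · rw [h.neg_one_pow]; norm_num
    · rw [h.neg_one_pow]; norm_num
  have hEsum : Summable E := by
    apply Summable.of_abs
    apply Summable.of_nonneg_of_le (fun p => abs_nonneg _) _ (summable_aa.mul_left 4)
    intro p
    rw [hE]
    simp only
    rw [abs_mul, abs_mul, abs_of_pos (aa_pos p)]
    calc |1+(-1:ℝ)^(p.1+1)| * |1+(-1:ℝ)^(p.2+1)| * aa p
        ≤ 2 * 2 * aa p := by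
          apply mul_le_mul_of_nonneg_right _ (aa_pos p).le
          exact mul_le_mul (habs _) (habs _) (abs_nonneg _) (by norm_num)
      _ = 4 * aa p := by ring
  have hexp : ∀ p : ℕ×ℕ, E p = aa p + (-1:ℝ)^(p.1+1) * aa p
      + ((-1:ℝ)^(p.2+1) * aa p + (-1:ℝ)^(p.1+p.2) * aa p) := by
    intro p
    rw [hE]
    simp only
    have : (-1:ℝ)^(p.1+1) * (-1:ℝ)^(p.2+1) = (-1:ℝ)^(p.1+p.2) := by
      rw [← pow_add, show p.1+1+(p.2+1) = (p.1+p.2)+2 by ring, pow_add]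
      norm_num
    rw [← this]
    ring
  have h1 : ∑' p, E p = VV + MM + (MM + SS) := by
    rw [tsum_congr hexp]
    rw [Summable.tsum_add (summable_aa.add summable_sgn1_aa) (summable_sgn2_aa.add summable_sgn12_aa)]
    rw [Summable.tsum_add summable_aa summable_sgn1_aa, Summable.tsum_add summable_sgn2_aa summable_sgn12_aa]
    rw [MM2_eq]
    rfl
  set ψ : ℕ×ℕ → ℕ×ℕ := fun q => (2*q.1+1, 2*q.2+1) with hψ
  have hinj : Function.Injective ψ := by
    intro a b h
    simp only [hψ, Prod.mk.injEq] at h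
    exact Prod.ext (by omega) (by omega)
  have hsupp : ∀ q ∉ Set.range ψ, E q = 0 := by
    intro q hq
    rw [hE]
    simp only
    rcases Nat.even_or_odd q.1 with h1 | h1
    · rw [(h1.add_one).neg_one_pow]
      ring
    · rcases Nat.even_or_odd q.2 with h2 | h2
      · rw [(h2.add_one).neg_one_pow]
        ring
      · obtain ⟨k1, hk1⟩ := h1
        obtain ⟨k2, hk2⟩ := h2
        exact absurd ⟨(k1, k2), Prod.ext (by simp [hψ]; omega) (by simp [hψ]; omega)⟩ hq
  have hcomp : ∀ q : ℕ×ℕ, E (ψ q) = (1/2) * aa q := by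
    intro q
    rw [hE, hψ]
    simp only
    have e1 : (-1:ℝ)^(2*q.1+1+1) = 1 := by
      rw [show 2*q.1+1+1 = 2*(q.1+1) by ring, pow_mul]
      norm_num
    have e2 : (-1:ℝ)^(2*q.2+1+1) = 1 := by
      rw [show 2*q.2+1+1 = 2*(q.2+1) by ring, pow_mul]
      norm_num
    rw [e1, e2]
    unfold aa
    simp only
    push_cast
    have h1 : ((q.1:ℝ)+1) ≠ 0 := by positivity
    have h2 : ((q.2:ℝ)+1) ≠ 0 := by positivity
    have h3 : ((q.1:ℝ)+(q.2:ℝ)+2) ≠ 0 := by positivity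
    field_simp
    ring
  have h2 : ∑' p, E p = (1/2) * VV := by
    rw [← hinj.tsum_eq (Function.support_subset_iff'.2 hsupp), tsum_congr hcomp,
      tsum_mul_left]
    rfl
  have := h1.symm.trans h2
  linarith

noncomputable def pf : ℕ×ℕ → ℝ := fun p => 1/(((p.1:ℝ)+1)*((p.1:ℝ)+(p.2:ℝ)+2)^2)

lemma pf_pos (p : ℕ×ℕ) : 0 < pf p := by unfold pf; positivity

lemma pf_le_aa (p : ℕ×ℕ) : pf p ≤ aa p := by
  unfold pf aa
  apply one_div_le_one_div_of_le (by positivity)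
  have h1 : ((p.2:ℝ)+1) ≤ ((p.1:ℝ)+(p.2:ℝ)+2) := by
    have := Nat.cast_nonneg (α := ℝ) p.1; linarith
  have h2 : (0:ℝ) < (p.1:ℝ)+1 := by positivity
  have h3 : (0:ℝ) < (p.1:ℝ)+(p.2:ℝ)+2 := by positivity
  nlinarith [mul_le_mul_of_nonneg_right (mul_le_mul_of_nonneg_left h1 h2.le) h3.le]

lemma aa_split (p : ℕ×ℕ) : aa p = pf p + pf (p.2, p.1) := by
  unfold pf aa
  simp only
  have h1 : ((p.1:ℝ)+1) ≠ 0 := by positivity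
  have h2 : ((p.2:ℝ)+1) ≠ 0 := by positivity
  have h3 : ((p.1:ℝ)+(p.2:ℝ)+2) ≠ 0 := by positivity
  have h4 : ((p.2:ℝ)+(p.1:ℝ)+2) ≠ 0 := by positivity
  field_simp
  ring

lemma summable_sgn_pf : Summable (fun p : ℕ×ℕ => (-1:ℝ)^(p.1+p.2) * pf p) := by
  apply summable_of_le_aa
  intro p
  rw [abs_mul, abs_pow, abs_neg, abs_one, one_pow, one_mul, abs_of_pos (pf_pos p)]
  exact pf_le_aa p

lemma summable_pf : Summable pf :=
  summable_of_le_aa fun p => by rw [abs_of_pos (pf_pos p)]; exact pf_le_aa p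

lemma summable_sgn_rowSums :
    Summable (fun n : ℕ => (-1:ℝ)^(n+1) * (Hh (n+1)/((n:ℝ)+1)^2)) := by
  apply Summable.of_abs
  apply summable_rowSums.congr
  intro n
  rw [abs_mul, abs_pow, abs_neg, abs_one, one_pow, one_mul,
    abs_of_nonneg (div_nonneg (Hh_nonneg _) (by positivity))]

lemma sum_sgn_pf : ∑' p : ℕ×ℕ, (-1:ℝ)^(p.1+p.2) * pf p = MM + (3/4) * Z3 := by
  have hptw : ∀ p : ℕ×ℕ, (-1:ℝ)^(p.1+p.2) * pf p
      = (fun n : ℕ => (-1:ℝ)^(n+1)/((n:ℝ)+1)^2) (p.1+p.2+1) / ((p.1:ℝ)+1) := by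
    intro p
    simp only
    unfold pf
    push_cast
    have he : (-1:ℝ)^(p.1+p.2+1+1) = (-1:ℝ)^(p.1+p.2) := by
      rw [show p.1+p.2+1+1 = (p.1+p.2)+2 by ring, pow_add]
      norm_num
    rw [he]
    have hn1 : ((p.1:ℝ)+1) ≠ 0 := by positivity
    have hn3 : ((p.1:ℝ)+(p.2:ℝ)+2) ≠ 0 := by positivity
    field_simp
    ring
  rw [tsum_congr hptw]
  rw [diag (fun n : ℕ => (-1:ℝ)^(n+1)/((n:ℝ)+1)^2) (by
    apply Summable.congr summable_sgn_pf
    intro p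
    exact hptw p)]
  have hptw2 : ∀ n : ℕ, (fun n : ℕ => (-1:ℝ)^(n+1)/((n:ℝ)+1)^2) n * Hh n
      = (-1:ℝ)^(n+1) * (Hh (n+1)/((n:ℝ)+1)^2) - (-1:ℝ)^(n+1)/((n:ℝ)+1)^3 := by
    intro n
    simp only
    rw [Hh_succ]
    have : ((n:ℝ)+1) ≠ 0 := by positivity
    field_simp
    ring
  rw [tsum_congr hptw2, Summable.tsum_sub summable_sgn_rowSums summable_sgn_cube, ← MM_eq_row]
  have : ∑' n : ℕ, (-1:ℝ)^(n+1)/((n:ℝ)+1)^3 = Eta := rfl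
  rw [this, eta3]
  ring

lemma sum_pf : ∑' p : ℕ×ℕ, pf p = VV - Z3 := by
  have hptw : ∀ p : ℕ×ℕ, pf p
      = (fun n : ℕ => 1/((n:ℝ)+1)^2) (p.1+p.2+1) / ((p.1:ℝ)+1) := by
    intro p
    simp only
    unfold pf
    push_cast
    have hn1 : ((p.1:ℝ)+1) ≠ 0 := by positivity
    have hn3 : ((p.1:ℝ)+(p.2:ℝ)+2) ≠ 0 := by positivity
    field_simp
    ring
  rw [tsum_congr hptw]
  rw [diag (fun n : ℕ => 1/((n:ℝ)+1)^2) (by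
    apply Summable.congr summable_pf
    intro p
    exact hptw p)]
  have hptw2 : ∀ n : ℕ, (fun n : ℕ => 1/((n:ℝ)+1)^2) n * Hh n
      = Hh (n+1)/((n:ℝ)+1)^2 - 1/((n:ℝ)+1)^3 := by
    intro n
    simp only
    rw [Hh_succ]
    have : ((n:ℝ)+1) ≠ 0 := by positivity
    field_simp
    ring
  rw [tsum_congr hptw2, Summable.tsum_sub summable_rowSums summable_cube, ← tsum_aa]
  rfl

lemma swap_pf_eq : ∑' p : ℕ×ℕ, pf (p.2, p.1) = ∑' p : ℕ×ℕ, pf p := by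
  rw [← (Equiv.prodComm ℕ ℕ).tsum_eq pf]
  rfl

lemma swap_sgn_pf_eq : ∑' p : ℕ×ℕ, (-1:ℝ)^(p.1+p.2) * pf (p.2, p.1)
    = ∑' p : ℕ×ℕ, (-1:ℝ)^(p.1+p.2) * pf p := by
  rw [← (Equiv.prodComm ℕ ℕ).tsum_eq (fun p : ℕ×ℕ => (-1:ℝ)^(p.1+p.2) * pf p)]
  apply tsum_congr
  intro p
  simp only [Equiv.prodComm_apply, Prod.swap]
  rw [add_comm p.2 p.1]

lemma summable_swap_pf : Summable (fun p : ℕ×ℕ => pf (p.2, p.1)) :=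
  summable_of_le_aa fun p => by
    rw [abs_of_pos (pf_pos _)]
    calc pf (p.2, p.1) ≤ aa (p.2, p.1) := pf_le_aa _
      _ = aa p := aa_swap p

lemma summable_swap_sgn_pf : Summable (fun p : ℕ×ℕ => (-1:ℝ)^(p.1+p.2) * pf (p.2, p.1)) :=
  summable_of_le_aa fun p => by
    rw [abs_mul, abs_pow, abs_neg, abs_one, one_pow, one_mul, abs_of_pos (pf_pos _)]
    calc pf (p.2, p.1) ≤ aa (p.2, p.1) := pf_le_aa _
      _ = aa p := aa_swap p

lemma VV_val : VV = 2 * Z3 := by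
  have h : VV = (∑' p : ℕ×ℕ, pf p) + ∑' p : ℕ×ℕ, pf (p.2, p.1) := by
    unfold VV
    rw [tsum_congr aa_split, Summable.tsum_add summable_pf summable_swap_pf]
  rw [swap_pf_eq, sum_pf] at h
  linarith

lemma SS_val : SS = (1/4) * Z3 := by
  have h : SS = (∑' p : ℕ×ℕ, (-1:ℝ)^(p.1+p.2) * pf p)
      + ∑' p : ℕ×ℕ, (-1:ℝ)^(p.1+p.2) * pf (p.2, p.1) := by
    unfold SS
    have : ∀ p : ℕ×ℕ, (-1:ℝ)^(p.1+p.2) * aa p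
        = (-1:ℝ)^(p.1+p.2) * pf p + (-1:ℝ)^(p.1+p.2) * pf (p.2, p.1) := by
      intro p
      rw [aa_split p]
      ring
    rw [tsum_congr this, Summable.tsum_add summable_sgn_pf summable_swap_sgn_pf]
  rw [swap_sgn_pf_eq, sum_sgn_pf] at h
  have hp := parity_rel
  have hv := VV_val
  linarith

lemma integrableOn_exp_c {c : ℝ} (hc : 0 < c) :
    IntegrableOn (fun u : ℝ => Real.exp (-(c*u))) (Ioi 0) := by
  have := exp_neg_integrableOn_Ioi 0 hc
  apply this.congr_fun _ measurableSet_Ioi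
  intro u _
  ring_nf

lemma integrableOn_mul_exp_c {c : ℝ} (hc : 0 < c) :
    IntegrableOn (fun u : ℝ => u * Real.exp (-(c*u))) (Ioi 0) := by
  apply Integrable.mono' ((integrableOn_exp_c (half_pos hc)).const_mul (2/c))
  · apply ContinuousOn.aestronglyMeasurable _ measurableSet_Ioi
    exact (continuousOn_id.mul (Real.continuous_exp.comp (continuous_const.mul continuous_id).neg).continuousOn)
  · filter_upwards [ae_restrict_mem measurableSet_Ioi] with u hu
    have hu0 : 0 < u := hu
    rw [Real.norm_eq_abs, abs_of_nonneg (by positivity)]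
    have key : u * Real.exp (-(c/2*u)) ≤ 2/c := by
      have h1 : c/2*u ≤ Real.exp (c/2*u) := by linarith [Real.add_one_le_exp (c/2*u)]
      have h2 : u ≤ 2/c * Real.exp (c/2*u) := by
        rw [div_mul_eq_mul_div, le_div_iff₀ hc]
        nlinarith
      calc u * Real.exp (-(c/2*u)) ≤ (2/c * Real.exp (c/2*u)) * Real.exp (-(c/2*u)) := by
            apply mul_le_mul_of_nonneg_right h2 (Real.exp_nonneg _)
        _ = 2/c := by rw [mul_assoc, ← Real.exp_add]; simp
    calc u * Real.exp (-(c*u)) = (u * Real.exp (-(c/2*u))) * Real.exp (-(c/2*u)) := by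
          rw [mul_assoc, ← Real.exp_add]; ring_nf
      _ ≤ (2/c) * Real.exp (-(c/2*u)) := by
          apply mul_le_mul_of_nonneg_right key (Real.exp_nonneg _)

lemma integral_exp_c {c : ℝ} (hc : 0 < c) :
    ∫ u in Ioi (0:ℝ), Real.exp (-(c*u)) = 1/c := by
  have h := integral_rpow_mul_exp_neg_mul_Ioi (a := 1) (r := c) one_pos hc
  rw [Real.Gamma_one, mul_one, Real.rpow_one] at h
  rw [← h]
  apply setIntegral_congr_fun measurableSet_Ioi
  intro t _
  norm_num

lemma integral_mul_exp_c {c : ℝ} (hc : 0 < c) :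
    ∫ u in Ioi (0:ℝ), u * Real.exp (-(c*u)) = 1/c^2 := by
  have h := integral_rpow_mul_exp_neg_mul_Ioi (a := 2) (r := c) two_pos hc
  rw [Real.Gamma_two, mul_one] at h
  have e1 : ∫ u in Ioi (0:ℝ), u * Real.exp (-(c*u))
      = ∫ t in Ioi (0:ℝ), t ^ ((2:ℝ)-1) * Real.exp (-(c*t)) := by
    apply setIntegral_congr_fun measurableSet_Ioi
    intro t _
    have h21 : ((2:ℝ)-1) = 1 := by norm_num
    simp only [h21, Real.rpow_one]
  rw [e1, h]
  rw [show (2:ℝ) = ((2:ℕ):ℝ) by norm_num, Real.rpow_natCast]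
  ring

lemma hasSum_log {u : ℝ} (hu : 0 < u) :
    HasSum (fun k : ℕ => (-1:ℝ)^k * Real.exp (-(((k:ℝ)+1)*u)) / ((k:ℝ)+1))
      (Real.log (1 + Real.exp (-u))) := by
  have habs : |(-Real.exp (-u))| < 1 := by
    rw [abs_neg, abs_of_pos (Real.exp_pos _)]
    exact Real.exp_lt_one_iff.2 (by linarith)
  have h := (hasSum_pow_div_log_of_abs_lt_one habs).neg
  rw [neg_neg, sub_neg_eq_add] at h
  have he : (fun k : ℕ => (-1:ℝ)^k * Real.exp (-(((k:ℝ)+1)*u)) / ((k:ℝ)+1))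
      = fun n : ℕ => -((-Real.exp (-u)) ^ (n + 1) / ((n:ℝ) + 1)) := by
    funext n
    have harg : ((n+1:ℕ):ℝ) * -u = -(((n:ℝ)+1)*u) := by push_cast; ring
    rw [neg_pow (Real.exp (-u)) (n+1), ← Real.exp_nat_mul, harg, pow_succ]
    ring
  rw [he]
  exact h


noncomputable def F1 (k : ℕ) : ℝ → ℝ :=
  fun u => u * ((-1:ℝ)^k * Real.exp (-(((k:ℝ)+1)*u)) / ((k:ℝ)+1))

lemma F1_eq (k : ℕ) : F1 k
    = fun u => ((-1:ℝ)^k/((k:ℝ)+1)) * (u * Real.exp (-(((k:ℝ)+1)*u))) := by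
  funext u; unfold F1; ring

lemma F1_int (k : ℕ) : Integrable (F1 k) (volume.restrict (Ioi 0)) := by
  rw [F1_eq]
  exact (integrableOn_mul_exp_c (show (0:ℝ) < (k:ℝ)+1 by positivity)).const_mul _

lemma F1_integral (k : ℕ) :
    ∫ u in Ioi (0:ℝ), F1 k u = (-1:ℝ)^k/((k:ℝ)+1)^3 := by
  rw [F1_eq]
  rw [MeasureTheory.integral_const_mul]
  rw [integral_mul_exp_c (show (0:ℝ) < (k:ℝ)+1 by positivity)]
  have hk : ((k:ℝ)+1) ≠ 0 := by positivity
  field_simp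

lemma F1_norm_integral (k : ℕ) :
    ∫ u in Ioi (0:ℝ), ‖F1 k u‖ = 1/((k:ℝ)+1)^3 := by
  have hc : (0:ℝ) < (k:ℝ)+1 := by positivity
  have he : ∀ u ∈ Ioi (0:ℝ), ‖F1 k u‖ = (1/((k:ℝ)+1)) * (u * Real.exp (-(((k:ℝ)+1)*u))) := by
    intro u hu
    have hu0 : (0:ℝ) < u := hu
    unfold F1
    rw [Real.norm_eq_abs, abs_mul, abs_of_pos hu0, abs_div, abs_mul, abs_pow, abs_neg,
      abs_one, one_pow, one_mul, abs_of_pos (Real.exp_pos _), abs_of_pos hc]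
    ring
  rw [setIntegral_congr_fun measurableSet_Ioi he, MeasureTheory.integral_const_mul,
    integral_mul_exp_c hc]
  have hk : ((k:ℝ)+1) ≠ 0 := by positivity
  field_simp

lemma summable_sgn0_cube : Summable (fun k : ℕ => (-1:ℝ)^k/((k:ℝ)+1)^3) := by
  apply Summable.of_abs
  apply summable_cube.congr
  intro n
  rw [abs_div, abs_pow, abs_neg, abs_one, one_pow, abs_of_pos (by positivity)]

lemma part1 : ∫ u in Ioi (0:ℝ), u * Real.log (1 + Real.exp (-u))
    = (3/4) * Z3 := by
  have hsum : Summable fun k : ℕ => ∫ u in Ioi (0:ℝ), ‖F1 k u‖ := by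
    apply summable_cube.congr
    intro k
    exact (F1_norm_integral k).symm
  have key := MeasureTheory.integral_tsum_of_summable_integral_norm F1_int hsum
  have hae : (fun u => ∑' k : ℕ, F1 k u)
      =ᵐ[volume.restrict (Ioi 0)] (fun u => u * Real.log (1 + Real.exp (-u))) := by
    filter_upwards [ae_restrict_mem measurableSet_Ioi] with u hu
    exact ((hasSum_log hu).mul_left u).tsum_eq
  rw [integral_congr_ae hae] at key
  rw [← key, tsum_congr F1_integral]
  have : ∀ k : ℕ, (-1:ℝ)^k/((k:ℝ)+1)^3 = -((-1:ℝ)^(k+1)/((k:ℝ)+1)^3) := by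
    intro k
    rw [pow_succ]
    ring
  rw [tsum_congr this, tsum_neg]
  have : ∑' k : ℕ, (-1:ℝ)^(k+1)/((k:ℝ)+1)^3 = Eta := rfl
  rw [this, eta3]
  ring

noncomputable def F2 (p : ℕ×ℕ) : ℝ → ℝ :=
  fun u => ((-1:ℝ)^(p.1+p.2) / (((p.1:ℝ)+1)*((p.2:ℝ)+1)))
    * Real.exp (-(((p.1:ℝ)+(p.2:ℝ)+2)*u))

lemma F2_int (p : ℕ×ℕ) : Integrable (F2 p) (volume.restrict (Ioi 0)) := by
  unfold F2
  exact (integrableOn_exp_c (show (0:ℝ) < (p.1:ℝ)+(p.2:ℝ)+2 by positivity)).const_mul _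

lemma F2_integral (p : ℕ×ℕ) :
    ∫ u in Ioi (0:ℝ), F2 p u = (-1:ℝ)^(p.1+p.2) * aa p := by
  unfold F2
  rw [MeasureTheory.integral_const_mul,
    integral_exp_c (show (0:ℝ) < (p.1:ℝ)+(p.2:ℝ)+2 by positivity)]
  unfold aa
  have h1 : ((p.1:ℝ)+1) ≠ 0 := by positivity
  have h2 : ((p.2:ℝ)+1) ≠ 0 := by positivity
  have h3 : ((p.1:ℝ)+(p.2:ℝ)+2) ≠ 0 := by positivity
  field_simp

lemma F2_norm_integral (p : ℕ×ℕ) :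
    ∫ u in Ioi (0:ℝ), ‖F2 p u‖ = aa p := by
  have hc : (0:ℝ) < (p.1:ℝ)+(p.2:ℝ)+2 := by positivity
  have he : ∀ u ∈ Ioi (0:ℝ), ‖F2 p u‖
      = (1/(((p.1:ℝ)+1)*((p.2:ℝ)+1))) * Real.exp (-(((p.1:ℝ)+(p.2:ℝ)+2)*u)) := by
    intro u _
    unfold F2
    rw [Real.norm_eq_abs, abs_mul, abs_div, abs_pow, abs_neg, abs_one, one_pow,
      abs_of_pos (Real.exp_pos _), abs_of_pos (show (0:ℝ) < ((p.1:ℝ)+1)*((p.2:ℝ)+1) by positivity)]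
  rw [setIntegral_congr_fun measurableSet_Ioi he, MeasureTheory.integral_const_mul,
    integral_exp_c hc]
  unfold aa
  have h1 : ((p.1:ℝ)+1) ≠ 0 := by positivity
  have h2 : ((p.2:ℝ)+1) ≠ 0 := by positivity
  have h3 : ((p.1:ℝ)+(p.2:ℝ)+2) ≠ 0 := by positivity
  field_simp

lemma hasSum_sq {u : ℝ} (hu : 0 < u) :
    ∑' p : ℕ×ℕ, F2 p u = (Real.log (1 + Real.exp (-u)))^2 := by
  set f : ℕ → ℝ := fun k => (-1:ℝ)^k * Real.exp (-(((k:ℝ)+1)*u)) / ((k:ℝ)+1) with hf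
  have hnorm : Summable fun k : ℕ => ‖f k‖ := by
    refine Summable.of_nonneg_of_le (fun k => norm_nonneg _) (fun k => ?_)
      (summable_geometric_of_lt_one (Real.exp_nonneg (-u))
        (show Real.exp (-u) < 1 from Real.exp_lt_one_iff.2 (by linarith)))
    rw [hf]
    simp only
    rw [Real.norm_eq_abs, abs_div, abs_mul, abs_pow, abs_neg, abs_one, one_pow, one_mul,
      abs_of_pos (Real.exp_pos _), abs_of_pos (show (0:ℝ) < (k:ℝ)+1 by positivity)]
    have e1 : Real.exp (-(((k:ℝ)+1)*u)) = Real.exp (-u) ^ (k+1) := by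
      rw [← Real.exp_nat_mul]
      congr 1
      push_cast
      ring
    rw [e1]
    calc Real.exp (-u) ^ (k+1) / ((k:ℝ)+1) ≤ Real.exp (-u) ^ (k+1) :=
          div_le_self (by positivity) (by push_cast; linarith [Nat.cast_nonneg (α := ℝ) k])
      _ ≤ Real.exp (-u) ^ k := by
          apply pow_le_pow_of_le_one (Real.exp_nonneg _)
            (Real.exp_le_one_iff.2 (by linarith))
          omega
  have hprod := tsum_mul_tsum_of_summable_norm hnorm hnorm
  rw [(hasSum_log hu).tsum_eq] at hprod
  rw [← sq] at hprod
  rw [hprod]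
  apply tsum_congr
  intro p
  rw [hf]
  simp only
  unfold F2
  have harg : -(((p.1:ℝ)+1)*u) + -(((p.2:ℝ)+1)*u) = -(((p.1:ℝ)+(p.2:ℝ)+2)*u) := by ring
  rw [pow_add, ← harg, Real.exp_add]
  have h1 : ((p.1:ℝ)+1) ≠ 0 := by positivity
  have h2 : ((p.2:ℝ)+1) ≠ 0 := by positivity
  field_simp

lemma part2 : ∫ u in Ioi (0:ℝ), (Real.log (1 + Real.exp (-u)))^2 = (1/4) * Z3 := by
  have hsum : Summable fun p : ℕ×ℕ => ∫ u in Ioi (0:ℝ), ‖F2 p u‖ := by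
    apply summable_aa.congr
    intro p
    exact (F2_norm_integral p).symm
  have key := MeasureTheory.integral_tsum_of_summable_integral_norm F2_int hsum
  have hae : (fun u => ∑' p : ℕ×ℕ, F2 p u)
      =ᵐ[volume.restrict (Ioi 0)] (fun u => (Real.log (1 + Real.exp (-u)))^2) := by
    filter_upwards [ae_restrict_mem measurableSet_Ioi] with u hu
    exact hasSum_sq hu
  rw [integral_congr_ae hae] at key
  rw [← key, tsum_congr F2_integral]
  have : ∑' p : ℕ×ℕ, (-1:ℝ)^(p.1+p.2) * aa p = SS := rfl
  rw [this, SS_val]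

lemma intOn1 : IntegrableOn (fun u : ℝ => u * Real.log (1 + Real.exp (-u))) (Ioi 0) := by
  apply Integrable.mono' (integrableOn_mul_exp_c one_pos)
  · exact (measurable_id.mul
      (Real.measurable_log.comp (by fun_prop))).aestronglyMeasurable
  · filter_upwards [ae_restrict_mem measurableSet_Ioi] with u hu
    have hu0 : (0:ℝ) < u := hu
    have hlog0 : 0 ≤ Real.log (1 + Real.exp (-u)) :=
      Real.log_nonneg (by linarith [Real.exp_pos (-u)])
    have hlog : Real.log (1 + Real.exp (-u)) ≤ Real.exp (-u) := by
      have := Real.log_le_sub_one_of_pos (show (0:ℝ) < 1 + Real.exp (-u) by positivity)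
      linarith
    rw [Real.norm_eq_abs, abs_of_nonneg (by positivity)]
    have : Real.exp (-u) = Real.exp (-(1*u)) := by ring_nf
    calc u * Real.log (1 + Real.exp (-u)) ≤ u * Real.exp (-u) :=
          mul_le_mul_of_nonneg_left hlog hu0.le
      _ = u * Real.exp (-(1*u)) := by rw [← this]

lemma intOn2 : IntegrableOn (fun u : ℝ => (Real.log (1 + Real.exp (-u)))^2) (Ioi 0) := by
  apply Integrable.mono' (integrableOn_exp_c two_pos)
  · exact ((Real.measurable_log.comp
      (by fun_prop : Measurable fun u : ℝ => 1 + Real.exp (-u))).pow_const 2).aestronglyMeasurable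
  · filter_upwards [ae_restrict_mem measurableSet_Ioi] with u hu
    have hu0 : (0:ℝ) < u := hu
    have hlog0 : 0 ≤ Real.log (1 + Real.exp (-u)) :=
      Real.log_nonneg (by linarith [Real.exp_pos (-u)])
    have hlog : Real.log (1 + Real.exp (-u)) ≤ Real.exp (-u) := by
      have := Real.log_le_sub_one_of_pos (show (0:ℝ) < 1 + Real.exp (-u) by positivity)
      linarith
    rw [Real.norm_eq_abs, abs_of_nonneg (by positivity)]
    calc (Real.log (1 + Real.exp (-u)))^2 ≤ (Real.exp (-u))^2 := by
          apply pow_le_pow_left₀ hlog0 hlog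
      _ = Real.exp (-(2*u)) := by
          rw [sq, ← Real.exp_add]
          congr 1
          ring

lemma zetaVal3_eq : zetaVal 3 = Z3 := by
  unfold zetaVal Z3
  rw [← Equiv.tsum_eq Equiv.pnatEquivNat.symm (fun n : ℕ+ => 1/(n:ℝ)^3)]
  apply tsum_congr
  intro n
  have : ((Equiv.pnatEquivNat.symm n : ℕ+) : ℝ) = (n:ℝ)+1 := by
    simp [Equiv.pnatEquivNat]
  rw [this]

end L3

theorem louchard_I3 :
    IntegrableOn (fun u : ℝ => u * Real.log (1 + Real.exp (-u)) + Real.log (1 + Real.exp (-u)) ^ 2) (Set.Ioi 0) ∧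
    (∫ u in Set.Ioi (0:ℝ), u * Real.log (1 + Real.exp (-u)) + Real.log (1 + Real.exp (-u)) ^ 2) = zetaVal 3 ∧
    (1 / 8) * (∫ u in Set.Ioi (0:ℝ), u * Real.log (1 + Real.exp (-u)) + Real.log (1 + Real.exp (-u)) ^ 2) = zetaVal 3 / 8 := by
  have hint := L3.intOn1.add L3.intOn2
  have hval : (∫ u in Set.Ioi (0:ℝ), u * Real.log (1 + Real.exp (-u)) + Real.log (1 + Real.exp (-u)) ^ 2) = zetaVal 3 := by
    rw [MeasureTheory.integral_add L3.intOn1 L3.intOn2, L3.part1, L3.part2, L3.zetaVal3_eq]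
    ring
  exact ⟨hint, hval, by rw [hval]; ring⟩
end

section
/- Let I(n) = ∫_0^1 (x^n + (1-x)^n)^{1/n} dx for positive integers n. Then I(n) → 3/4 as n → ∞, and moreover n·(I(n) - 3/4) → 0 as n → ∞ (i.e. I_0 = 3/4 and I_1 = 0 in Louchard's asymptotic expansion). -/
open MeasureTheory Real Set Filter

private lemma half_le_max' (x : ℝ) : (1:ℝ)/2 ≤ max x (1-x) := by
  rcases le_total x (1-x) with h|h
  · rw [max_eq_right h]; linarith
  · rw [max_eq_left h]; linarith

private lemma sum_pow_eq' (x : ℝ) (n : ℕ) :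
    x^n + (1-x)^n = max x (1-x) ^ n + min x (1-x) ^ n := by
  rcases le_total x (1-x) with h|h
  · rw [max_eq_right h, min_eq_left h]; ring
  · rw [max_eq_left h, min_eq_right h]

private lemma ptwise_lower' (n : ℕ) (hn : 1 ≤ n) (x : ℝ) (hx : x ∈ Icc (0:ℝ) 1) :
    max x (1-x) ≤ (x^n + (1-x)^n) ^ ((n:ℝ)⁻¹) := by
  have hM : (1:ℝ)/2 ≤ max x (1-x) := half_le_max' x
  have hm : 0 ≤ min x (1-x) := le_min hx.1 (by linarith [hx.2])
  have key : max x (1-x) ^ n ≤ x^n + (1-x)^n := by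
    rw [sum_pow_eq']
    nlinarith [pow_nonneg hm n]
  calc max x (1-x) = ((max x (1-x)) ^ n) ^ ((n:ℝ)⁻¹) :=
        (Real.pow_rpow_inv_natCast (by linarith) (by omega)).symm
    _ ≤ (x^n + (1-x)^n) ^ ((n:ℝ)⁻¹) :=
        Real.rpow_le_rpow (by positivity) key (by positivity)

private lemma ptwise_upper' (k : ℕ) (x : ℝ) (hx : x ∈ Icc (0:ℝ) 1) :
    (x^(k+1) + (1-x)^(k+1)) ^ ((((k:ℝ)+1))⁻¹)
      ≤ max x (1-x) + ((k:ℝ)+1)⁻¹ * (2^k * min x (1-x) ^ (k+1)) := by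
  set M := max x (1-x) with hMdef
  set m := min x (1-x) with hmdef
  have hM : (1:ℝ)/2 ≤ M := half_le_max' x
  have hM0 : (0:ℝ) < M := by linarith
  have hm : 0 ≤ m := le_min hx.1 (by linarith [hx.2])
  set c : ℝ := ((k:ℝ)+1)⁻¹ * (2^k * m^(k+1)) with hc
  have hk0 : (0:ℝ) < (k:ℝ)+1 := by positivity
  have hcnn : 0 ≤ c := by positivity
  have key : x^(k+1) + (1-x)^(k+1) ≤ (M + c)^(k+1) := by
    rw [sum_pow_eq']
    have hdiv : (0:ℝ) ≤ c / M := by positivity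
    have bern : 1 + ((k:ℝ)+1) * (c/M) ≤ (1 + c/M)^(k+1) := by
      have := one_add_mul_le_pow (a := c/M) (by linarith) (k+1)
      push_cast at this
      linarith
    have h1 : (M + c)^(k+1) = M^(k+1) * (1 + c/M)^(k+1) := by
      rw [← mul_pow]
      congr 1
      field_simp
    have h2 : M^(k+1) * (1 + ((k:ℝ)+1) * (c/M)) = M^(k+1) + (2*M)^k * m^(k+1) := by
      rw [hc]
      field_simp
      ring
    have h3 : m^(k+1) ≤ (2*M)^k * m^(k+1) := by
      have h2M : (1:ℝ) ≤ 2*M := by linarith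
      have : (1:ℝ) ≤ (2*M)^k := one_le_pow₀ h2M
      nlinarith [pow_nonneg hm (k+1)]
    have h4 : M^(k+1) * (1 + ((k:ℝ)+1) * (c/M)) ≤ M^(k+1) * (1 + c/M)^(k+1) :=
      mul_le_mul_of_nonneg_left bern (by positivity)
    linarith [h1, h2, h4]
  have hbase : 0 ≤ x^(k+1) + (1-x)^(k+1) :=
    add_nonneg (pow_nonneg hx.1 _) (pow_nonneg (by linarith [hx.2]) _)
  calc (x^(k+1) + (1-x)^(k+1)) ^ (((k:ℝ)+1)⁻¹)
      ≤ ((M + c)^(k+1)) ^ (((k:ℝ)+1)⁻¹) := Real.rpow_le_rpow hbase key (by positivity)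
    _ = M + c := by
        have hcast : (((k+1:ℕ):ℝ))⁻¹ = (((k:ℝ)+1))⁻¹ := by push_cast; ring
        rw [← hcast]
        exact Real.pow_rpow_inv_natCast (by linarith) (by omega)

private lemma int_max' : ∫ x in (0:ℝ)..1, max x (1-x) = 3/4 := by
  have hi1 : IntervalIntegrable (fun x : ℝ => max x (1-x)) volume 0 (1/2) :=
    (continuous_id.max (by continuity)).intervalIntegrable _ _
  have hi2 : IntervalIntegrable (fun x : ℝ => max x (1-x)) volume (1/2) 1 :=
    (continuous_id.max (by continuity)).intervalIntegrable _ _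
  rw [← intervalIntegral.integral_add_adjacent_intervals hi1 hi2]
  have e1 : ∫ x in (0:ℝ)..(1/2), max x (1-x) = ∫ x in (0:ℝ)..(1/2), (1-x) := by
    apply intervalIntegral.integral_congr
    intro x hx
    rw [uIcc_of_le (by norm_num)] at hx
    simp only [mem_Icc] at hx
    show max x (1-x) = 1-x
    exact max_eq_right (by linarith [hx.1, hx.2])
  have e2 : ∫ x in (1/2:ℝ)..1, max x (1-x) = ∫ x in (1/2:ℝ)..1, x := by
    apply intervalIntegral.integral_congr
    intro x hx
    rw [uIcc_of_le (by norm_num)] at hx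
    simp only [mem_Icc] at hx
    show max x (1-x) = x
    exact max_eq_left (by linarith [hx.1, hx.2])
  have e3 : ∫ x in (0:ℝ)..(1/2), ((1:ℝ)-x) = ∫ x in (1/2:ℝ)..1, x := by
    have key := intervalIntegral.integral_comp_sub_left (a := (0:ℝ)) (b := (1/2:ℝ))
      (fun y : ℝ => y) 1
    norm_num at key ⊢
    rw [key]
  rw [e1, e2, e3, integral_id]
  norm_num

private lemma int_min_pow' (n : ℕ) :
    ∫ x in (0:ℝ)..1, min x (1-x) ^ n = (1/2)^n / (n+1) := by
  have hc : Continuous (fun x : ℝ => min x (1-x) ^ n) :=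
    (continuous_id.min (by continuity)).pow n
  have hi1 : IntervalIntegrable (fun x : ℝ => min x (1-x) ^ n) volume 0 (1/2) :=
    hc.intervalIntegrable _ _
  have hi2 : IntervalIntegrable (fun x : ℝ => min x (1-x) ^ n) volume (1/2) 1 :=
    hc.intervalIntegrable _ _
  rw [← intervalIntegral.integral_add_adjacent_intervals hi1 hi2]
  have e1 : ∫ x in (0:ℝ)..(1/2), min x (1-x) ^ n = ∫ x in (0:ℝ)..(1/2), x ^ n := by
    apply intervalIntegral.integral_congr
    intro x hx
    rw [uIcc_of_le (by norm_num)] at hx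
    simp only [mem_Icc] at hx
    show min x (1-x) ^ n = x ^ n
    rw [min_eq_left (by linarith [hx.1, hx.2])]
  have e2 : ∫ x in (1/2:ℝ)..1, min x (1-x) ^ n = ∫ x in (0:ℝ)..(1/2), x ^ n := by
    have e2' : ∫ x in (1/2:ℝ)..1, min x (1-x) ^ n = ∫ x in (1/2:ℝ)..1, (1-x) ^ n := by
      apply intervalIntegral.integral_congr
      intro x hx
      rw [uIcc_of_le (by norm_num)] at hx
      simp only [mem_Icc] at hx
      show min x (1-x) ^ n = (1-x) ^ n
      rw [min_eq_right (by linarith [hx.1, hx.2])]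
    have key := intervalIntegral.integral_comp_sub_left (a := (1/2:ℝ)) (b := (1:ℝ))
      (fun y : ℝ => y ^ n) 1
    norm_num at key
    rw [e2', key, integral_pow]
    norm_num
  rw [e1, e2, integral_pow]
  norm_num
  rw [pow_succ]
  field_simp
  ring

private lemma I_bounds' (n : ℕ) (hn : 1 ≤ n) :
    3/4 ≤ (∫ x in (0:ℝ)..1, (x ^ n + (1 - x) ^ n) ^ ((n : ℝ)⁻¹)) ∧
    (∫ x in (0:ℝ)..1, (x ^ n + (1 - x) ^ n) ^ ((n : ℝ)⁻¹)) ≤ 3/4 + 1/(2*n*(n+1)) := by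
  obtain ⟨k, rfl⟩ : ∃ k, n = k + 1 := ⟨n - 1, (Nat.succ_pred_eq_of_pos hn).symm⟩
  have hcont : ContinuousOn (fun x : ℝ => (x^(k+1)+(1-x)^(k+1))^(((k+1:ℕ):ℝ)⁻¹)) (Icc 0 1) := by
    apply ContinuousOn.rpow_const
    · exact ((continuous_pow (k+1)).add
        (((continuous_const.sub continuous_id).pow (k+1)))).continuousOn
    · intro x hx
      right; positivity
  have hint : IntervalIntegrable
      (fun x : ℝ => (x^(k+1)+(1-x)^(k+1))^(((k+1:ℕ):ℝ)⁻¹)) volume 0 1 := by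
    apply ContinuousOn.intervalIntegrable
    rwa [uIcc_of_le zero_le_one]
  have hmaxint : IntervalIntegrable (fun x : ℝ => max x (1-x)) volume 0 1 :=
    (continuous_id.max (continuous_const.sub continuous_id)).intervalIntegrable _ _
  have hminint : IntervalIntegrable
      (fun x : ℝ => ((k:ℝ)+1)⁻¹ * (2^k * min x (1-x) ^ (k+1))) volume 0 1 :=
    (continuous_const.mul (continuous_const.mul
      ((continuous_id.min (continuous_const.sub continuous_id)).pow (k+1)))).intervalIntegrable _ _
  constructor
  · have h := intervalIntegral.integral_mono_on zero_le_one hmaxint hint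
      (fun x hx => by
        have := ptwise_lower' (k+1) (by omega) x hx
        simpa using this)
    rw [int_max'] at h
    exact h
  · have hineq : ∀ x ∈ Icc (0:ℝ) 1,
        (x^(k+1)+(1-x)^(k+1))^(((k+1:ℕ):ℝ)⁻¹)
          ≤ max x (1-x) + ((k:ℝ)+1)⁻¹ * (2^k * min x (1-x) ^ (k+1)) := by
      intro x hx
      have h := ptwise_upper' k x hx
      have hcast : (((k+1:ℕ):ℝ))⁻¹ = (((k:ℝ)+1))⁻¹ := by push_cast; ring
      rw [hcast]
      exact h
    have h := intervalIntegral.integral_mono_on zero_le_one hint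
      (hmaxint.add hminint) hineq
    rw [intervalIntegral.integral_add hmaxint hminint, int_max'] at h
    have e : ∫ x in (0:ℝ)..1, ((k:ℝ)+1)⁻¹ * (2^k * min x (1-x) ^ (k+1))
        = ((k:ℝ)+1)⁻¹ * (2^k * ((1/2)^(k+1) / ((k:ℝ)+1+1))) := by
      rw [intervalIntegral.integral_const_mul]
      congr 1
      rw [intervalIntegral.integral_const_mul]
      congr 1
      rw [int_min_pow' (k+1)]
      push_cast
      ring_nf
    rw [e] at h
    have e2 : ((k:ℝ)+1)⁻¹ * (2^k * ((1/2)^(k+1) / ((k:ℝ)+1+1)))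
        = 1/(2*((k:ℝ)+1)*(((k:ℝ)+1)+1)) := by
      have h2 : (2:ℝ)^k * (1/2)^(k+1) = 1/2 := by
        rw [pow_succ, ← mul_assoc, ← mul_pow]
        norm_num
      have h3 : (2:ℝ)^k * ((1/2)^(k+1)/((k:ℝ)+1+1)) = (1/2)/((k:ℝ)+1+1) := by
        rw [← mul_div_assoc, h2]
      rw [h3]
      have hk1 : (0:ℝ) < (k:ℝ)+1 := by positivity
      have hk2 : (0:ℝ) < (k:ℝ)+1+1 := by positivity
      field_simp
    rw [e2] at h
    push_cast at h ⊢
    exact h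

theorem louchard_I0_I1 :
    Filter.Tendsto (fun n : ℕ => ∫ x in (0:ℝ)..1, (x ^ n + (1 - x) ^ n) ^ ((n : ℝ)⁻¹)) Filter.atTop (nhds (3 / 4)) ∧
    Filter.Tendsto (fun n : ℕ => (n : ℝ) * ((∫ x in (0:ℝ)..1, (x ^ n + (1 - x) ^ n) ^ ((n : ℝ)⁻¹)) - 3 / 4))
      Filter.atTop (nhds 0) := by
  set I : ℕ → ℝ := fun n => ∫ x in (0:ℝ)..1, (x ^ n + (1 - x) ^ n) ^ ((n : ℝ)⁻¹) with hI
  have hlow : ∀ n : ℕ, 1 ≤ n → 3/4 ≤ I n := fun n hn => (I_bounds' n hn).1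
  have hup : ∀ n : ℕ, 1 ≤ n → I n ≤ 3/4 + 1/(2*n*(n+1)) := fun n hn => (I_bounds' n hn).2
  have hub2 : ∀ n : ℕ, 1 ≤ n → 1/(2*(n:ℝ)*((n:ℝ)+1)) ≤ 1/(n:ℝ) := by
    intro n hn
    have hn1 : (1:ℝ) ≤ (n:ℝ) := by exact_mod_cast hn
    apply one_div_le_one_div_of_le (by linarith)
    nlinarith
  have htend : Tendsto (fun n : ℕ => 3/4 + 1/(n:ℝ)) atTop (nhds (3/4)) := by
    have h := (tendsto_const_nhds : Tendsto (fun _ : ℕ => (3/4:ℝ)) atTop (nhds (3/4))).add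
      tendsto_one_div_atTop_nhds_zero_nat
    simpa using h
  have htend0 : Tendsto (fun n : ℕ => 1/(n:ℝ)) atTop (nhds 0) :=
    tendsto_one_div_atTop_nhds_zero_nat
  constructor
  · apply tendsto_of_tendsto_of_tendsto_of_le_of_le'
      (tendsto_const_nhds : Tendsto (fun _ : ℕ => (3/4:ℝ)) atTop (nhds (3/4))) htend
    · filter_upwards [eventually_ge_atTop 1] with n hn using hlow n hn
    · filter_upwards [eventually_ge_atTop 1] with n hn
      have h1 := hup n hn
      have h2 := hub2 n hn
      linarith
  · apply tendsto_of_tendsto_of_tendsto_of_le_of_le'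
      (tendsto_const_nhds : Tendsto (fun _ : ℕ => (0:ℝ)) atTop (nhds 0)) htend0
    · filter_upwards [eventually_ge_atTop 1] with n hn
      have h1 := hlow n hn
      have hn0 : (0:ℝ) ≤ (n:ℝ) := Nat.cast_nonneg n
      nlinarith
    · filter_upwards [eventually_ge_atTop 1] with n hn
      have h1 := hup n hn
      have hn1 : (1:ℝ) ≤ (n:ℝ) := by exact_mod_cast hn
      have key : (n:ℝ) * (I n - 3/4) ≤ (n:ℝ) * (1/(2*n*(n+1))) :=
        mul_le_mul_of_nonneg_left (by linarith) (by linarith)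
      have e : (n:ℝ) * (1/(2*(n:ℝ)*((n:ℝ)+1))) = 1/(2*((n:ℝ)+1)) := by
        field_simp
      have le2 : 1/(2*((n:ℝ)+1)) ≤ 1/(n:ℝ) := by
        apply one_div_le_one_div_of_le (by linarith)
        linarith
      calc (n:ℝ) * (I n - 3/4) ≤ 1/(2*((n:ℝ)+1)) := by rw [← e]; exact key
        _ ≤ 1/(n:ℝ) := le2
end
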